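/- arXiv:solv-int/9505002 — 3 statements merged into one kernel-verified Lean document; each statement's English description precedes it below -/
import Mathlib

section
/- The Halphen system has no non-trivial polynomial first integral: if F ∈ ℂ[x₁,x₂,x₃] satisfies d_H(F) = 0, then F is a constant polynomial. -/
open MvPolynomial

/-- Components of the Halphen vector field:
`V₁ = x₂x₃ − x₁(x₂+x₃)`, `V₂ = x₃x₁ − x₂(x₃+x₁)`, `V₃ = x₁x₂ − x₃(x₁+x₂)`. -/
noncomputable def V1 : MvPolynomial (Fin 3) ℂ := X 1 * X 2 - X 0 * (X 1 + X 2)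
noncomputable def V2 : MvPolynomial (Fin 3) ℂ := X 2 * X 0 - X 1 * (X 2 + X 0)
noncomputable def V3 : MvPolynomial (Fin 3) ℂ := X 0 * X 1 - X 2 * (X 0 + X 1)

/-- The Halphen derivation `d_H(F) = V₁∂₁F + V₂∂₂F + V₃∂₃F` on `ℂ[x₁,x₂,x₃]`. -/
noncomputable def dH (F : MvPolynomial (Fin 3) ℂ) : MvPolynomial (Fin 3) ℂ :=
  V1 * pderiv 0 F + V2 * pderiv 1 F + V3 * pderiv 2 F

noncomputable def EH (P : MvPolynomial (Fin 3) ℂ) : MvPolynomial (Fin 3) ℂ :=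
  X 0 * pderiv 0 P + X 1 * pderiv 1 P + X 2 * pderiv 2 P

lemma deg3 (d : Fin 3 →₀ ℕ) : d.degree = d 0 + d 1 + d 2 := by
  rw [Finsupp.degree_apply, Finset.sum_subset (Finset.subset_univ _)
    (fun x _ hx => Finsupp.notMem_support_iff.mp hx), Fin.sum_univ_three]

lemma dH_sum {ι : Type*} (s : Finset ι) (f : ι → MvPolynomial (Fin 3) ℂ) :
    dH (∑ i ∈ s, f i) = ∑ i ∈ s, dH (f i) := by
  simp [dH, map_sum, Finset.mul_sum, Finset.sum_add_distrib]

lemma EH_sum {ι : Type*} (s : Finset ι) (f : ι → MvPolynomial (Fin 3) ℂ) :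
    EH (∑ i ∈ s, f i) = ∑ i ∈ s, EH (f i) := by
  simp [EH, map_sum, Finset.mul_sum, Finset.sum_add_distrib]

lemma V1_hom : V1.IsHomogeneous 2 :=
  ((isHomogeneous_X ℂ 1).mul (isHomogeneous_X ℂ 2)).sub
    ((isHomogeneous_X ℂ 0).mul ((isHomogeneous_X ℂ 1).add (isHomogeneous_X ℂ 2)))
lemma V2_hom : V2.IsHomogeneous 2 :=
  ((isHomogeneous_X ℂ 2).mul (isHomogeneous_X ℂ 0)).sub
    ((isHomogeneous_X ℂ 1).mul ((isHomogeneous_X ℂ 2).add (isHomogeneous_X ℂ 0)))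
lemma V3_hom : V3.IsHomogeneous 2 :=
  ((isHomogeneous_X ℂ 0).mul (isHomogeneous_X ℂ 1)).sub
    ((isHomogeneous_X ℂ 2).mul ((isHomogeneous_X ℂ 0).add (isHomogeneous_X ℂ 1)))


lemma deg_sub (d e : Fin 3 →₀ ℕ) (h : e ≤ d) : (d - e).degree = d.degree - e.degree := by
  have h0 := Finsupp.le_def.mp h 0
  have h1 := Finsupp.le_def.mp h 1
  have h2 := Finsupp.le_def.mp h 2
  rw [deg3, deg3, deg3, Finsupp.tsub_apply, Finsupp.tsub_apply, Finsupp.tsub_apply]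
  omega

lemma deg_single (i : Fin 3) : (Finsupp.single i (1:ℕ)).degree = 1 := by
  fin_cases i <;> simp [deg3, Finsupp.single_apply, Fin.ext_iff]

lemma pderiv_isHom {P : MvPolynomial (Fin 3) ℂ} {n : ℕ} (h : P.IsHomogeneous n) (i : Fin 3) :
    (pderiv i P).IsHomogeneous (n - 1) := by
  rw [P.as_sum, map_sum]
  apply IsHomogeneous.sum
  intro v hv
  rw [pderiv_monomial]
  by_cases h0 : v i = 0
  · simp only [h0, Nat.cast_zero, mul_zero, monomial_zero]
    exact isHomogeneous_zero _ _ _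
  · apply isHomogeneous_monomial
    have hd : v.degree = n := by
      by_contra hne
      exact (mem_support_iff.mp hv) (h.coeff_eq_zero hne)
    have hle : Finsupp.single i 1 ≤ v :=
      Finsupp.single_le_iff.mpr (Nat.one_le_iff_ne_zero.mpr h0)
    rw [deg_sub _ _ hle, deg_single, hd]

lemma pderiv_hom0 {P : MvPolynomial (Fin 3) ℂ} (h : P.IsHomogeneous 0) (i : Fin 3) :
    pderiv i P = 0 := by
  rw [P.as_sum, map_sum]
  apply Finset.sum_eq_zero
  intro v hv
  have hd : v.degree = 0 := by
    by_contra hne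
    exact (mem_support_iff.mp hv) (h.coeff_eq_zero hne)
  have hv0 : v = 0 := (Finsupp.degree_eq_zero_iff v).mp hd
  subst hv0
  simp


lemma X_mul_pderiv_monomial (j : Fin 3) (v : Fin 3 →₀ ℕ) (c : ℂ) :
    X j * pderiv j (monomial v c) = monomial v (c * (v j : ℂ)) := by
  rw [pderiv_monomial]
  by_cases h0 : v j = 0
  · simp [h0]
  · have hle : Finsupp.single j 1 ≤ v :=
      Finsupp.single_le_iff.mpr (Nat.one_le_iff_ne_zero.mpr h0)
    rw [X, monomial_mul, one_mul, add_tsub_cancel_of_le hle]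

lemma euler {P : MvPolynomial (Fin 3) ℂ} {n : ℕ} (h : P.IsHomogeneous n) :
    EH P = n • P := by
  conv_lhs => rw [P.as_sum]
  conv_rhs => rw [P.as_sum]
  rw [EH_sum, Finset.smul_sum]
  apply Finset.sum_congr rfl
  intro v hv
  have hd : v.degree = n := by
    by_contra hne
    exact (mem_support_iff.mp hv) (h.coeff_eq_zero hne)
  show X 0 * pderiv 0 _ + X 1 * pderiv 1 _ + X 2 * pderiv 2 _ = _
  rw [X_mul_pderiv_monomial, X_mul_pderiv_monomial, X_mul_pderiv_monomial,
    ← map_add, ← map_add]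
  have : n • monomial v (coeff v P) = monomial v ((n : ℂ) * coeff v P) := by
    rw [← map_nsmul]
    congr 1
    rw [nsmul_eq_mul]
  rw [this]
  congr 1
  rw [← hd, deg3]
  push_cast
  ring

lemma dH_isHom {P : MvPolynomial (Fin 3) ℂ} {n : ℕ} (h : P.IsHomogeneous n) :
    (dH P).IsHomogeneous (n + 1) := by
  cases n with
  | zero =>
    rw [dH, pderiv_hom0 h, pderiv_hom0 h, pderiv_hom0 h]
    simpa using isHomogeneous_zero (Fin 3) ℂ 1
  | succ m =>
    have h0 := V1_hom.mul (pderiv_isHom h 0)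
    have h1 := V2_hom.mul (pderiv_isHom h 1)
    have h2 := V3_hom.mul (pderiv_isHom h 2)
    simp only [Nat.succ_sub_one] at h0 h1 h2
    have h3 := (h0.add h1).add h2
    rw [dH]
    rwa [Nat.add_comm] at h3

lemma EH_isHom {P : MvPolynomial (Fin 3) ℂ} {n : ℕ} (h : P.IsHomogeneous n) :
    (EH P).IsHomogeneous n := by
  cases n with
  | zero =>
    rw [EH, pderiv_hom0 h, pderiv_hom0 h, pderiv_hom0 h]
    simpa using isHomogeneous_zero (Fin 3) ℂ 0
  | succ m =>
    have h0 := (isHomogeneous_X ℂ 0).mul (pderiv_isHom h 0)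
    have h1 := (isHomogeneous_X ℂ 1).mul (pderiv_isHom h 1)
    have h2 := (isHomogeneous_X ℂ 2).mul (pderiv_isHom h 2)
    simp only [Nat.succ_sub_one] at h0 h1 h2
    have h3 := (h0.add h1).add h2
    rw [EH]
    rwa [Nat.add_comm] at h3

lemma hc_dH (P : MvPolynomial (Fin 3) ℂ) (k : ℕ) :
    homogeneousComponent (k + 1) (dH P) = dH (homogeneousComponent k P) := by
  conv_lhs => rw [← sum_homogeneousComponent P, dH_sum, map_sum]
  rw [Finset.sum_eq_single k]
  · rw [homogeneousComponent_of_mem ((mem_homogeneousSubmodule _ _).mpr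
      (dH_isHom (homogeneousComponent_isHomogeneous k P))), if_pos rfl]
  · intro i _ hik
    rw [homogeneousComponent_of_mem ((mem_homogeneousSubmodule _ _).mpr
      (dH_isHom (homogeneousComponent_isHomogeneous i P)))]
    exact if_neg (by omega)
  · intro hk
    rw [homogeneousComponent_eq_zero k P (by simp only [Finset.mem_range] at hk; omega)]
    simp [dH]

lemma hc0_dH (P : MvPolynomial (Fin 3) ℂ) :
    homogeneousComponent 0 (dH P) = 0 := by
  conv_lhs => rw [← sum_homogeneousComponent P, dH_sum, map_sum]
  apply Finset.sum_eq_zero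
  intro i _
  rw [homogeneousComponent_of_mem ((mem_homogeneousSubmodule _ _).mpr
    (dH_isHom (homogeneousComponent_isHomogeneous i P)))]
  exact if_neg (by omega)

lemma hc_EH (P : MvPolynomial (Fin 3) ℂ) (k : ℕ) :
    homogeneousComponent k (EH P) = EH (homogeneousComponent k P) := by
  conv_lhs => rw [← sum_homogeneousComponent P, EH_sum, map_sum]
  rw [Finset.sum_eq_single k]
  · rw [homogeneousComponent_of_mem ((mem_homogeneousSubmodule _ _).mpr
      (EH_isHom (homogeneousComponent_isHomogeneous k P))), if_pos rfl]
  · intro i _ hik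
    rw [homogeneousComponent_of_mem ((mem_homogeneousSubmodule _ _).mpr
      (EH_isHom (homogeneousComponent_isHomogeneous i P)))]
    exact if_neg (by omega)
  · intro hk
    rw [homogeneousComponent_eq_zero k P (by simp only [Finset.mem_range] at hk; omega)]
    simp [EH]
noncomputable def phs : Fin 3 → MvPolynomial (Fin 3) ℂ := fun i => X i + 1
noncomputable def pss : Fin 3 → MvPolynomial (Fin 3) ℂ := fun i => X i - 1

lemma pderiv_shift (j : Fin 3) (P : MvPolynomial (Fin 3) ℂ) :
    pderiv j (aeval phs P) = aeval phs (pderiv j P) := by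
  induction P using MvPolynomial.induction_on with
  | C a => simp
  | add p q hp hq => rw [map_add, map_add, hp, hq, map_add, map_add]
  | mul_X p i hp =>
    by_cases hij : i = j
    · subst hij
      simp only [map_mul, aeval_X, phs, pderiv_mul, pderiv_X_self, hp, map_add,
        pderiv_one, add_zero, mul_one]
    · simp only [map_mul, aeval_X, phs, pderiv_mul, pderiv_X_of_ne hij, hp, map_add,
        pderiv_one, add_zero, mul_zero, map_zero]

lemma shift_inv (P : MvPolynomial (Fin 3) ℂ) : aeval pss (aeval phs P) = P := by
  induction P using MvPolynomial.induction_on with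
  | C a => simp
  | add p q hp hq => rw [map_add, map_add, hp, hq]
  | mul_X p i hp =>
    simp only [map_mul, aeval_X, phs, pss, map_add, map_one, hp]
    ring

lemma aeval_V1 : aeval phs V1 = V1 - 2 * X 0 - 1 := by
  simp only [V1, phs, map_sub, map_mul, map_add, aeval_X]
  ring
lemma aeval_V2 : aeval phs V2 = V2 - 2 * X 1 - 1 := by
  simp only [V2, phs, map_sub, map_mul, map_add, aeval_X]
  ring
lemma aeval_V3 : aeval phs V3 = V3 - 2 * X 2 - 1 := by
  simp only [V3, phs, map_sub, map_mul, map_add, aeval_X]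
  ring
lemma dH_zero : dH 0 = 0 := by simp [dH]

lemma homog_int_zero {P : MvPolynomial (Fin 3) ℂ} {d : ℕ} (hd : 1 ≤ d)
    (hP : P.IsHomogeneous d) (h0 : dH P = 0) : P = 0 := by
  set G := aeval phs P with hG
  have heq1 : (V1 - 2 * X 0 - 1) * pderiv 0 G + (V2 - 2 * X 1 - 1) * pderiv 1 G
      + (V3 - 2 * X 2 - 1) * pderiv 2 G = 0 := by
    have h := congrArg (aeval phs) h0
    rw [dH, map_add, map_add, map_mul, map_mul, map_mul, map_zero,
      aeval_V1, aeval_V2, aeval_V3,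
      ← pderiv_shift, ← pderiv_shift, ← pderiv_shift] at h
    exact h
  have heq2 : (X 0 + 1) * pderiv 0 G + (X 1 + 1) * pderiv 1 G + (X 2 + 1) * pderiv 2 G
      = (d : MvPolynomial (Fin 3) ℂ) * G := by
    have h := congrArg (aeval phs) (euler hP)
    rw [EH, map_add, map_add, map_mul, map_mul, map_mul, aeval_X, aeval_X, aeval_X,
      ← pderiv_shift, ← pderiv_shift, ← pderiv_shift, map_nsmul, nsmul_eq_mul] at h
    simp only [phs] at h
    exact h
  have master : dH G = EH G + (d : MvPolynomial (Fin 3) ℂ) * G := by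
    rw [dH, EH]
    linear_combination heq1 + heq2
  have hCd : ((d : MvPolynomial (Fin 3) ℂ)) = C (d : ℂ) := (map_natCast C d).symm
  have hc0 : homogeneousComponent 0 G = 0 := by
    have h := congrArg (homogeneousComponent 0) master
    rw [hc0_dH, map_add, hc_EH, euler (homogeneousComponent_isHomogeneous 0 G),
      zero_smul, zero_add, hCd, homogeneousComponent_C_mul] at h
    rcases mul_eq_zero.mp h.symm with h' | h'
    · exact absurd (by exact_mod_cast (MvPolynomial.C_eq_zero.mp h'))
        (by omega : d ≠ 0)
    · exact h'
  have hcsucc : ∀ k, homogeneousComponent k G = 0 → homogeneousComponent (k+1) G = 0 := by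
    intro k ih
    have h := congrArg (homogeneousComponent (k+1)) master
    rw [hc_dH, ih, dH_zero, map_add, hc_EH,
      euler (homogeneousComponent_isHomogeneous (k+1) G), hCd,
      homogeneousComponent_C_mul, nsmul_eq_mul,
      show (((k+1 : ℕ)) : MvPolynomial (Fin 3) ℂ) = C ((k+1 : ℕ) : ℂ) from
        (map_natCast C _).symm, ← add_mul, ← C_add] at h
    rcases mul_eq_zero.mp h.symm with h' | h'
    · exfalso
      have hne : ((k+1 : ℕ) : ℂ) + (d : ℂ) ≠ 0 := by
        have : ((k+1+d : ℕ) : ℂ) ≠ 0 := Nat.cast_ne_zero.mpr (by omega)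
        push_cast at this ⊢
        exact this
      exact hne (MvPolynomial.C_eq_zero.mp h')
    · exact h'
  have hall : ∀ k, homogeneousComponent k G = 0 := by
    intro k
    induction k with
    | zero => exact hc0
    | succ k ih => exact hcsucc k ih
  have hGz : G = 0 := by
    rw [← sum_homogeneousComponent G]
    exact Finset.sum_eq_zero fun i _ => hall i
  have h := shift_inv P
  rw [← hG, hGz, map_zero] at h
  exact h.symm


/-- The Halphen system has no non-trivial polynomial first integral:
if `F ∈ ℂ[x₁,x₂,x₃]` satisfies `d_H(F) = 0`, then `F` is a constant polynomial. -/
theorem halphen_no_polynomial_first_integral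
    (F : MvPolynomial (Fin 3) ℂ) (hF : dH F = 0) :
    ∃ c : ℂ, F = C c := by
  refine ⟨coeff 0 F, ?_⟩
  have hzero : ∀ n : ℕ, homogeneousComponent (n+1) F = 0 := fun n =>
    homog_int_zero (Nat.le_add_left 1 n) (homogeneousComponent_isHomogeneous _ F)
      (by rw [← hc_dH, hF, map_zero])
  conv_lhs => rw [← sum_homogeneousComponent F]
  rw [Finset.sum_eq_single 0]
  · exact homogeneousComponent_zero F
  · intro i _ hi
    obtain ⟨m, rfl⟩ := Nat.exists_eq_succ_of_ne_zero hi
    exact hzero m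
  · intro h0
    exact absurd (Finset.mem_range.mpr (Nat.succ_pos _)) h0
end

section
/- Let F ∈ ℂ[x₁,x₂,x₃] be an irreducible homogeneous polynomial of degree m ≥ 1 such that d_H(F) = α·P_i·F for some i ∈ {1,2,3} and some α ∈ ℂ, where P₁ = −2x₃, P₂ = −2x₁, P₃ = −2x₂. Then F is a nonzero scalar multiple of F_i (where F₁ = x₁−x₂, F₂ = x₂−x₃, F₃ = x₃−x₁) and α = 1. -/
open MvPolynomial

/-- The Darboux polynomials `F₁ = x₁−x₂`, `F₂ = x₂−x₃`, `F₃ = x₃−x₁`. -/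
noncomputable def Fd : Fin 3 → MvPolynomial (Fin 3) ℂ :=
  ![X 0 - X 1, X 1 - X 2, X 2 - X 0]

/-- The eigenvalues `P₁ = −2x₃`, `P₂ = −2x₁`, `P₃ = −2x₂`. -/
noncomputable def Pd : Fin 3 → MvPolynomial (Fin 3) ℂ :=
  ![-(C 2 * X 2), -(C 2 * X 0), -(C 2 * X 1)]


lemma pderiv_aeval_fin {n l : ℕ} (f : Fin n → MvPolynomial (Fin l) ℂ) (j : Fin l)
    (p : MvPolynomial (Fin n) ℂ) :
    pderiv j (aeval f p) = ∑ k, aeval f (pderiv k p) * pderiv j (f k) := by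
  induction p using MvPolynomial.induction_on with
  | C a => simp
  | add p q hp hq =>
      simp only [map_add, hp, hq, add_mul, Finset.sum_add_distrib]
  | mul_X p k hp =>
      have this1 : ∀ i : Fin n, aeval f (pderiv i (p * X k)) * pderiv j (f i)
          = aeval f (pderiv i p) * pderiv j (f i) * f k
            + (if i = k then aeval f p * pderiv j (f k) else 0) := by
        intro i
        rcases eq_or_ne i k with rfl | h
        · simp only [pderiv_mul, pderiv_X_self, mul_one, map_add, map_mul, aeval_X, if_pos rfl,
            add_mul, if_true]
          ring
        · simp only [pderiv_mul, pderiv_X_of_ne (Ne.symm h), mul_zero, add_zero, map_mul,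
            aeval_X, if_neg h, add_zero]
          ring
      have hR : ∑ i, aeval f (pderiv i (p * X k)) * pderiv j (f i)
          = (∑ i, aeval f (pderiv i p) * pderiv j (f i)) * f k
            + aeval f p * pderiv j (f k) := by
        rw [Finset.sum_congr rfl fun i _ => this1 i, Finset.sum_add_distrib,
          Finset.sum_ite_eq' Finset.univ k fun _ => aeval f p * pderiv j (f k)]
        simp [Finset.sum_mul]
      rw [hR, map_mul, aeval_X, pderiv_mul, hp]

lemma euler_s2 {σ : Type} [Fintype σ] [DecidableEq σ] {m : ℕ} {p : MvPolynomial σ ℂ}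
    (h : p.IsHomogeneous m) : ∑ i, X i * pderiv i p = C (m : ℂ) * p := by
  have subkey : ∀ (d : σ →₀ ℕ) (c : ℂ) (i : σ),
      X i * pderiv i (monomial d c) = monomial d (c * d i) := by
    intro d c i
    rw [pderiv_monomial]
    rcases Nat.eq_zero_or_pos (d i) with h0 | h0
    · simp [h0]
    · have hexp : Finsupp.single i 1 + (d - Finsupp.single i 1) = d := by
        ext j
        simp only [Finsupp.add_apply, Finsupp.tsub_apply, Finsupp.single_apply]
        rcases eq_or_ne i j with rfl | hji
        · simp only [if_pos rfl, if_true]; omega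
        · simp [hji]
      rw [show (X i : MvPolynomial σ ℂ) = monomial (Finsupp.single i 1) 1 by
        rw [← X_pow_eq_monomial, pow_one], monomial_mul, one_mul, hexp]
  have key : ∀ d ∈ p.support, ∑ i, X i * pderiv i (monomial d (coeff d p))
      = C (m : ℂ) * monomial d (coeff d p) := by
    intro d hd
    have hdeg : (Finsupp.weight 1) d = m := h (mem_support_iff.mp hd)
    have h2 : ∑ i : σ, d i = m := by
      have h3 : ∑ i ∈ d.support, d i = m := by
        simpa [Finsupp.weight_apply, Finsupp.sum] using hdeg
      rw [← h3]
      exact (Finset.sum_subset (Finset.subset_univ d.support)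
        (fun x _ hx => Finsupp.notMem_support_iff.mp hx)).symm
    have hsum : ∑ i : σ, (d i : ℂ) = (m : ℂ) := by exact_mod_cast congrArg (Nat.cast) h2
    calc ∑ i, X i * pderiv i (monomial d (coeff d p))
        = ∑ i, monomial d (coeff d p * d i) :=
          Finset.sum_congr rfl fun i _ => subkey d (coeff d p) i
      _ = monomial d (coeff d p * ∑ i, (d i : ℂ)) := by
          rw [Finset.mul_sum, ← map_sum]
      _ = C (m : ℂ) * monomial d (coeff d p) := by rw [hsum, C_mul_monomial, mul_comm]
  calc ∑ i, X i * pderiv i p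
      = ∑ i, X i * pderiv i (∑ d ∈ p.support, monomial d (coeff d p)) := by
        rw [support_sum_monomial_coeff]
    _ = ∑ i, ∑ d ∈ p.support, X i * pderiv i (monomial d (coeff d p)) := by
        simp only [map_sum, Finset.mul_sum]
    _ = ∑ d ∈ p.support, ∑ i, X i * pderiv i (monomial d (coeff d p)) := Finset.sum_comm
    _ = ∑ d ∈ p.support, C (m : ℂ) * monomial d (coeff d p) := Finset.sum_congr rfl key
    _ = C (m : ℂ) * p := by rw [← Finset.mul_sum, support_sum_monomial_coeff]

lemma dvd_of_sub {n : ℕ} (a : MvPolynomial (Fin n) ℂ) (p : MvPolynomial (Fin (n+1)) ℂ)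
    (h : aeval (Fin.cons a fun i => X i) p = 0) :
    (X 0 - rename Fin.succ a) ∣ p := by
  set e := finSuccEquiv ℂ n with he
  have hCC : ∀ r : ℂ, e (C r) = Polynomial.C (C r) := by
    intro r
    have : (C r : MvPolynomial (Fin (n+1)) ℂ) = algebraMap ℂ _ r := rfl
    rw [this, AlgEquiv.commutes]
    simp [Polynomial.algebraMap_apply, MvPolynomial.algebraMap_eq]
  have heval : ∀ q : MvPolynomial (Fin (n+1)) ℂ,
      Polynomial.eval a (e q) = aeval (Fin.cons a fun i => X i) q := by
    intro q
    have h2 : ((Polynomial.evalRingHom a).comp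
          (e : MvPolynomial (Fin (n+1)) ℂ →+* Polynomial (MvPolynomial (Fin n) ℂ)))
        = ((aeval (Fin.cons a fun i => X i) :
            MvPolynomial (Fin (n+1)) ℂ →ₐ[ℂ] MvPolynomial (Fin n) ℂ) : _ →+* _) := by
      apply ringHom_ext
      · intro r
        simp [hCC r]
      · intro i
        refine Fin.cases ?_ ?_ i
        · simp [he, finSuccEquiv_X_zero]
        · intro k
          simp [he, finSuccEquiv_X_succ]
    exact RingHom.congr_fun h2 q
  have hCrename : ∀ q : MvPolynomial (Fin n) ℂ, e (rename Fin.succ q) = Polynomial.C q := by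
    intro q
    have h3 : (e.toAlgHom.comp (rename (Fin.succ : Fin n → Fin (n+1))))
        = (Polynomial.CAlgHom : MvPolynomial (Fin n) ℂ →ₐ[ℂ] _) := by
      apply algHom_ext
      intro i
      simp [he, finSuccEquiv_X_succ, Polynomial.CAlgHom]
    exact AlgHom.congr_fun h3 q
  have hroot : Polynomial.X - Polynomial.C a ∣ e p :=
    Polynomial.dvd_iff_isRoot.mpr (by rw [Polynomial.IsRoot.def, heval, h])
  obtain ⟨q, hq⟩ := hroot
  refine ⟨e.symm q, ?_⟩
  apply e.injective
  rw [map_mul, map_sub, finSuccEquiv_X_zero, hCrename, AlgEquiv.apply_symm_apply, hq]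

lemma isUnit_constant : ∀ {n : ℕ} (Q : MvPolynomial (Fin n) ℂ), IsUnit Q →
    ∃ c : ℂ, c ≠ 0 ∧ Q = C c := by
  intro n
  induction n with
  | zero =>
      intro Q h
      obtain ⟨c, rfl⟩ := C_surjective (Fin 0) Q
      refine ⟨c, ?_, rfl⟩
      rintro rfl
      rw [map_zero] at h
      exact not_isUnit_zero h
  | succ n ih =>
      intro Q h
      have h2 : IsUnit (finSuccEquiv ℂ n Q) := h.map _
      obtain ⟨r, hr, hCr⟩ := Polynomial.isUnit_iff.mp h2
      obtain ⟨c, hc, rfl⟩ := ih r hr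
      refine ⟨c, hc, ?_⟩
      apply (finSuccEquiv ℂ n).injective
      rw [← hCr]
      have : (C c : MvPolynomial (Fin (n+1)) ℂ) = algebraMap ℂ _ c := rfl
      rw [this, AlgEquiv.commutes]
      simp [Polynomial.algebraMap_apply, MvPolynomial.algebraMap_eq]


lemma X0_dvd_of (W : MvPolynomial (Fin 2) ℂ)
    (h : aeval (Fin.cons (0 : MvPolynomial (Fin 1) ℂ) fun i => X i) W = 0) :
    (X 0 : MvPolynomial (Fin 2) ℂ) ∣ W := by
  have := dvd_of_sub (0 : MvPolynomial (Fin 1) ℂ) W h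
  simpa using this

lemma keyA (α : ℂ) (hα : α ≠ 0) (N : ℕ) :
    ∀ (r : ℂ) (H : MvPolynomial (Fin 2) ℂ), degreeOf 0 H ≤ N →
      C 2 * C α * X 1 * H
        = X 0 * (C r * H + X 0 * pderiv 0 H - (X 0 - C 2 * X 1) * pderiv 1 H) → H = 0 := by
  induction N using Nat.strong_induction_on with
  | _ N ih =>
    intro r H hdeg heq
    set ψ : MvPolynomial (Fin 2) ℂ →ₐ[ℂ] MvPolynomial (Fin 1) ℂ :=
      aeval (Fin.cons 0 fun i => X i) with hψdef
    have hψ := DFunLike.congr_arg ψ heq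
    have hψ0 : ψ (X 0) = 0 := by simp [hψdef]
    have hψ1 : ψ (X 1) = X 0 := by
      rw [hψdef, aeval_X, show (1 : Fin 2) = Fin.succ 0 from rfl, Fin.cons_succ]
    have hψC : ∀ z : ℂ, ψ (C z) = C z := fun z => by simp [hψdef]
    simp only [map_mul, hψC, hψ1, hψ0, zero_mul] at hψ
    have hψH : ψ H = 0 := by
      by_contra hne
      exact mul_ne_zero (mul_ne_zero (mul_ne_zero
        (by simp : (C 2 : MvPolynomial (Fin 1) ℂ) ≠ 0)
        (by simp [hα] : (C α : MvPolynomial (Fin 1) ℂ) ≠ 0)) (X_ne_zero 0)) hne hψ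
    obtain ⟨K, rfl⟩ := X0_dvd_of H hψH
    simp only [pderiv_mul, pderiv_X_self, pderiv_X_of_ne (show (0 : Fin 2) ≠ 1 by decide)] at heq
    have heq2 : X 0 * (C 2 * C α * X 1 * K)
        = X 0 * (X 0 * (C (r + 1) * K + X 0 * pderiv 0 K
            - (X 0 - C 2 * X 1) * pderiv 1 K)) := by
      rw [map_add, map_one]
      linear_combination heq
    have heq3 := mul_left_cancel₀ (X_ne_zero (0 : Fin 2)) heq2
    rcases eq_or_ne K 0 with rfl | hK
    · simp
    · have hdegK : degreeOf 0 (X 0 * K) = degreeOf 0 K + 1 := by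
        rw [mul_comm]
        exact (degreeOf_mul_X_eq_degreeOf_add_one_iff 0 K).mpr hK
      have : K = 0 := ih (degreeOf 0 K) (by omega) (r + 1) K le_rfl heq3
      exact absurd this hK

lemma keyB (N : ℕ) :
    ∀ (k : ℕ), 1 ≤ k → ∀ (W : MvPolynomial (Fin 2) ℂ), degreeOf 0 W ≤ N →
      X 0 * (pderiv 1 W - pderiv 0 W) = C (k : ℂ) * W → W = 0 := by
  induction N using Nat.strong_induction_on with
  | _ N ih =>
    intro k hk W hdeg heq
    have hkc : ((k : ℂ)) ≠ 0 := by exact_mod_cast Nat.one_le_iff_ne_zero.mp hk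
    have hdvd : (X 0 : MvPolynomial (Fin 2) ℂ) ∣ W := by
      have h3 : X 0 ∣ C ((k : ℂ)⁻¹) * (C (k : ℂ) * W) :=
        Dvd.dvd.mul_left ⟨pderiv 1 W - pderiv 0 W, heq.symm ▸ rfl⟩ _
      rwa [← mul_assoc, ← map_mul, inv_mul_cancel₀ hkc, map_one, one_mul] at h3
    obtain ⟨K, rfl⟩ := hdvd
    simp only [pderiv_mul, pderiv_X_self, pderiv_X_of_ne (show (0 : Fin 2) ≠ 1 by decide)] at heq
    have heq2 : X 0 * (X 0 * (pderiv 1 K - pderiv 0 K))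
        = X 0 * (C ((k + 1 : ℕ) : ℂ) * K) := by
      push_cast
      rw [map_add, map_one]
      linear_combination heq
    have heq3 := mul_left_cancel₀ (X_ne_zero (0 : Fin 2)) heq2
    rcases eq_or_ne K 0 with rfl | hK
    · simp
    · have hdegK : degreeOf 0 (X 0 * K) = degreeOf 0 K + 1 := by
        rw [mul_comm]
        exact (degreeOf_mul_X_eq_degreeOf_add_one_iff 0 K).mpr hK
      have : K = 0 := ih (degreeOf 0 K) (by omega) (k + 1) (by omega) K le_rfl heq3
      exact absurd this hK
noncomputable def phi : MvPolynomial (Fin 3) ℂ →ₐ[ℂ] MvPolynomial (Fin 2) ℂ :=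
  aeval ![X 0, X 0, X 1]
noncomputable def rho : MvPolynomial (Fin 2) ℂ →ₐ[ℂ] MvPolynomial (Fin 2) ℂ :=
  aeval ![X 0 + X 1, X 1]

lemma cr0 (F : MvPolynomial (Fin 3) ℂ) :
    pderiv 0 (phi F) = phi (pderiv 0 F) + phi (pderiv 1 F) := by
  rw [phi, pderiv_aeval_fin, Fin.sum_univ_three]
  simp

lemma cr1 (F : MvPolynomial (Fin 3) ℂ) :
    pderiv 1 (phi F) = phi (pderiv 2 F) := by
  rw [phi, pderiv_aeval_fin, Fin.sum_univ_three]
  simp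

lemma crr0 (G : MvPolynomial (Fin 2) ℂ) :
    pderiv 0 (rho G) = rho (pderiv 0 G) := by
  rw [rho, pderiv_aeval_fin, Fin.sum_univ_two]
  simp

lemma crr1 (G : MvPolynomial (Fin 2) ℂ) :
    pderiv 1 (rho G) = rho (pderiv 0 G) + rho (pderiv 1 G) := by
  rw [rho, pderiv_aeval_fin, Fin.sum_univ_two]
  simp

lemma core (F : MvPolynomial (Fin 3) ℂ) (m : ℕ) (hm : 1 ≤ m)
    (hhom : F.IsHomogeneous m) (hirr : Irreducible F)
    (α : ℂ) (hD : dH F = (C α * (-(C 2 * X 2))) * F) :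
    (∃ c : ℂ, c ≠ 0 ∧ F = C c * (X 0 - X 1)) ∧ α = 1 := by
  have hφD := DFunLike.congr_arg phi hD
  rw [dH] at hφD
  simp only [V1, V2, V3, map_add, map_mul, map_sub, map_neg, phi, aeval_X,
    Matrix.cons_val_zero, Matrix.cons_val_one, Matrix.head_cons, Matrix.cons_val_two,
    Matrix.tail_cons, aeval_C, MvPolynomial.algebraMap_eq] at hφD
  -- hφD is now the projected PDE with atoms `aeval ![X 0, X 0, X 1] (pderiv i F)`
  have hG0 : phi F = 0 := by
    by_cases hα : α = 0
    · subst hα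
      rw [map_zero, zero_mul, zero_mul] at hφD
      have hGhom : (phi F).IsHomogeneous m := by
        have hre : phi = (rename (![0, 0, 1] : Fin 3 → Fin 2) :
            MvPolynomial (Fin 3) ℂ →ₐ[ℂ] MvPolynomial (Fin 2) ℂ) := by
          apply algHom_ext
          intro i
          fin_cases i <;> simp [phi, rename_X]
        rw [hre]
        exact hhom.rename_isHomogeneous
      have hEuler : X 0 * pderiv 0 (phi F) + X 1 * pderiv 1 (phi F) = C (m:ℂ) * phi F := by
        have := euler_s2 hGhom
        rwa [Fin.sum_univ_two] at this
      rw [cr0, cr1] at hEuler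
      have hts : X 0 * ((X 0 - X 1) * phi (pderiv 2 F)) = X 0 * (C (m:ℂ) * phi F) := by
        simp only [phi] at hEuler ⊢
        linear_combination X 0 * hEuler + hφD
      have hts2 := mul_left_cancel₀ (X_ne_zero (0 : Fin 2)) hts
      have h5 := DFunLike.congr_arg rho hts2
      simp only [map_mul, map_sub, rho, aeval_X, Matrix.cons_val_zero, Matrix.cons_val_one,
        Matrix.head_cons, aeval_C, MvPolynomial.algebraMap_eq] at h5
      have hWeq : X 0 * (pderiv 1 (rho (phi F)) - pderiv 0 (rho (phi F)))
          = C ((m:ℕ):ℂ) * (rho (phi F)) := by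
        rw [crr0, crr1, cr1]
        simp only [rho, phi] at h5 ⊢
        linear_combination h5
      have hW0 : rho (phi F) = 0 := keyB (degreeOf 0 (rho (phi F))) m hm _ le_rfl hWeq
      have hcomp : ∀ p : MvPolynomial (Fin 2) ℂ, aeval ![X 0 - X 1, X 1] (rho p) = p := by
        intro p
        rw [rho, ← AlgHom.comp_apply]
        have hid : (aeval ![X 0 - X 1, X 1] :
              MvPolynomial (Fin 2) ℂ →ₐ[ℂ] MvPolynomial (Fin 2) ℂ).comp
            (aeval ![X 0 + X 1, X 1]) = AlgHom.id ℂ _ := by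
          apply algHom_ext
          intro i
          fin_cases i <;> simp
        rw [hid, AlgHom.id_apply]
      calc phi F = aeval ![X 0 - X 1, X 1] (rho (phi F)) := (hcomp (phi F)).symm
        _ = 0 := by rw [hW0, map_zero]
    · have hE : C 2 * C α * X 1 * phi F
          = X 0 * (C (0:ℂ) * phi F + X 0 * pderiv 0 (phi F)
            - (X 0 - C 2 * X 1) * pderiv 1 (phi F)) := by
        rw [map_zero, cr0, cr1,
          show (C 2 : MvPolynomial (Fin 2) ℂ) = 2 from map_ofNat C 2]
        rw [show (C 2 : MvPolynomial (Fin 2) ℂ) = 2 from map_ofNat C 2] at hφD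
        simp only [phi] at hφD ⊢
        linear_combination hφD
      exact keyA α hα (degreeOf 0 (phi F)) 0 (phi F) le_rfl hE
  -- divisibility
  have hbut : aeval (Fin.cons (X 0 : MvPolynomial (Fin 2) ℂ) fun i => X i) F = 0 := by
    have hfn : (Fin.cons (X 0 : MvPolynomial (Fin 2) ℂ) fun i => X i)
        = ![X 0, X 0, X 1] := by
      funext i
      fin_cases i <;> rfl
    rw [hfn]
    exact hG0
  have hdvd : (X 0 - X 1 : MvPolynomial (Fin 3) ℂ) ∣ F := by
    have h6 := dvd_of_sub (X 0 : MvPolynomial (Fin 2) ℂ) F hbut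
    rwa [rename_X, show (Fin.succ 0 : Fin 3) = 1 from rfl] at h6
  obtain ⟨Q, hQ⟩ := hdvd
  have hQunit : IsUnit Q := by
    rcases hirr.isUnit_or_isUnit hQ with h | h
    · exfalso
      have h7 := h.map (aeval (fun _ => (0:ℂ)) : MvPolynomial (Fin 3) ℂ →ₐ[ℂ] ℂ)
      simp at h7
    · exact h
  obtain ⟨c, hc0, rfl⟩ := isUnit_constant Q hQunit
  have hF : F = C c * (X 0 - X 1) := by rw [hQ]; ring
  have hX01 : (X 0 - X 1 : MvPolynomial (Fin 3) ℂ) ≠ 0 := by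
    intro h0
    have h1 : (aeval (fun i : Fin 3 => if i = 0 then (1:ℂ) else 0)) ((X 0 - X 1 : MvPolynomial (Fin 3) ℂ)) = 1 := by simp
    rw [h0, map_zero] at h1
    exact one_ne_zero h1.symm
  refine ⟨⟨c, hc0, hF⟩, ?_⟩
  rw [hF] at hD
  rw [dH] at hD
  simp only [V1, V2, V3, pderiv_C_mul, map_sub, pderiv_X_self,
    pderiv_X_of_ne (show (1 : Fin 3) ≠ 0 by decide),
    pderiv_X_of_ne (show (0 : Fin 3) ≠ 1 by decide),
    pderiv_X_of_ne (show (0 : Fin 3) ≠ 2 by decide),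
    pderiv_X_of_ne (show (1 : Fin 3) ≠ 2 by decide),
    show (C 2 : MvPolynomial (Fin 3) ℂ) = 2 from map_ofNat C 2] at hD
  have h8 : (C α - 1) * (C c * (2 * (X 2 * (X 0 - X 1)))) = (0 : MvPolynomial (Fin 3) ℂ) := by
    linear_combination hD
  rcases mul_eq_zero.mp h8 with h9 | h9
  · have h10 : (C α : MvPolynomial (Fin 3) ℂ) = C 1 := by
      rw [map_one]
      exact sub_eq_zero.mp h9
    exact C_injective _ _ h10
  · exfalso
    rcases mul_eq_zero.mp h9 with h11 | h11
    · exact hc0 (C_eq_zero.mp h11)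
    rcases mul_eq_zero.mp h11 with h12 | h12
    · norm_num at h12
    rcases mul_eq_zero.mp h12 with h13 | h13
    · exact X_ne_zero 2 h13
    · exact hX01 h13

def cEquiv : Fin 3 ≃ Fin 3 :=
  ⟨![1, 2, 0], ![2, 0, 1], by decide, by decide⟩

lemma cE0 : cEquiv 0 = 1 := rfl
lemma cE1 : cEquiv 1 = 2 := rfl
lemma cE2 : cEquiv 2 = 0 := rfl

lemma dH_rename (F : MvPolynomial (Fin 3) ℂ) :
    dH (rename (⇑cEquiv) F) = rename (⇑cEquiv) (dH F) := by
  have h0 : pderiv 1 (rename (⇑cEquiv) F) = rename (⇑cEquiv) (pderiv 0 F) := by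
    have := pderiv_rename cEquiv.injective 0 F
    rwa [cE0] at this
  have h1 : pderiv 2 (rename (⇑cEquiv) F) = rename (⇑cEquiv) (pderiv 1 F) := by
    have := pderiv_rename cEquiv.injective 1 F
    rwa [cE1] at this
  have h2 : pderiv 0 (rename (⇑cEquiv) F) = rename (⇑cEquiv) (pderiv 2 F) := by
    have := pderiv_rename cEquiv.injective 2 F
    rwa [cE2] at this
  have hV1 : rename (⇑cEquiv) V1 = V2 := by
    simp [V1, V2, rename_X, cE0, cE1, cE2]
  have hV2 : rename (⇑cEquiv) V2 = V3 := by
    simp [V2, V3, rename_X, cE0, cE1, cE2]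
  have hV3 : rename (⇑cEquiv) V3 = V1 := by
    simp [V3, V1, rename_X, cE0, cE1, cE2]
  rw [dH, dH, h0, h1, h2, map_add, map_add, map_mul, map_mul, map_mul, hV1, hV2, hV3]
  ring

lemma irr_rename (F : MvPolynomial (Fin 3) ℂ) (h : Irreducible F) :
    Irreducible (rename (⇑cEquiv) F) := by
  have h2 := h.map (renameEquiv ℂ cEquiv)
  simpa using h2

theorem halphen_darboux_eigenvalue_multiple
    (F : MvPolynomial (Fin 3) ℂ) (m : ℕ) (hm : 1 ≤ m)
    (hhom : F.IsHomogeneous m) (hirr : Irreducible F)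
    (i : Fin 3) (α : ℂ) (hD : dH F = (C α * Pd i) * F) :
    (∃ c : ℂ, c ≠ 0 ∧ F = C c * Fd i) ∧ α = 1 := by
  have hren : ∀ (G : MvPolynomial (Fin 3) ℂ) (j : Fin 3), dH G = (C α * Pd j) * G →
      dH (rename (⇑cEquiv) G) = (C α * Pd (cEquiv j)) * rename (⇑cEquiv) G := by
    intro G j hG
    rw [dH_rename, hG]
    have hPd : rename (⇑cEquiv) (Pd j) = Pd (cEquiv j) := by
      fin_cases j <;>
        simp [Pd, rename_X, cE0, cE1, cE2, map_neg, map_mul, rename_C]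
    rw [map_mul, map_mul, rename_C, hPd]
  fin_cases i
  · -- i = 0
    have hD0 : dH F = (C α * (-(C 2 * X 2))) * F := by
      rw [hD]
      norm_num [Pd]
    obtain ⟨⟨c, hc, hF⟩, hα⟩ := core F m hm hhom hirr α hD0
    exact ⟨⟨c, hc, by rw [hF]; norm_num [Fd]⟩, hα⟩
  · -- i = 1 : apply rename twice
    have hD1 := hren F 1 (by exact hD)
    rw [cE1] at hD1
    have hD2 := hren _ 2 hD1
    rw [cE2] at hD2
    have hD0 : dH (rename (⇑cEquiv) (rename (⇑cEquiv) F))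
        = (C α * (-(C 2 * X 2))) * rename (⇑cEquiv) (rename (⇑cEquiv) F) := by
      rw [hD2]
      norm_num [Pd]
    obtain ⟨⟨c, hc, hF⟩, hα⟩ := core _ m hm
      ((hhom.rename_isHomogeneous).rename_isHomogeneous)
      (irr_rename _ (irr_rename _ hirr)) α hD0
    refine ⟨⟨c, hc, ?_⟩, hα⟩
    apply rename_injective _ cEquiv.injective
    apply rename_injective _ cEquiv.injective
    rw [hF]
    norm_num [Fd, map_mul, rename_C, map_sub, rename_X, cE0, cE1, cE2]
  · -- i = 2 : apply rename once
    have hD1 := hren F 2 (by exact hD)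
    rw [cE2] at hD1
    have hD0 : dH (rename (⇑cEquiv) F)
        = (C α * (-(C 2 * X 2))) * rename (⇑cEquiv) F := by
      rw [hD1]
      norm_num [Pd]
    obtain ⟨⟨c, hc, hF⟩, hα⟩ := core _ m hm hhom.rename_isHomogeneous
      (irr_rename _ hirr) α hD0
    refine ⟨⟨c, hc, ?_⟩, hα⟩
    apply rename_injective _ cEquiv.injective
    rw [hF]
    norm_num [Fd, map_mul, rename_C, map_sub, rename_X, cE0, cE1, cE2]
end

section
/- Let d_V be a homogeneous derivation of ℂ[x₁,…,xₙ] and suppose F₁,…,F_s are, up to multiplicative constants, all irreducible homogeneous Darboux polynomials of d_V, with d_V(Fᵢ) = Pᵢ·Fᵢ for i = 1,…,s. If the polynomials P₁,…,P_s are linearly independent over ℤ, then every Darboux polynomial of d_V is, up to a nonzero multiplicative constant, of the form ∏ᵢ Fᵢ^{αᵢ} for non-negative integers α₁,…,α_s. -/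
open MvPolynomial

/-- The derivation `d_V(F) = Σᵢ Vᵢ∂ᵢF` of `ℂ[x₁,…,xₙ]` associated to the polynomial
vector field `V = (V₁,…,Vₙ)`. -/
noncomputable def dV {n : ℕ} (V : Fin n → MvPolynomial (Fin n) ℂ)
    (F : MvPolynomial (Fin n) ℂ) : MvPolynomial (Fin n) ℂ :=
  ∑ i, V i * pderiv i F

section Auxiliary

variable {n s : ℕ} {V : Fin n → MvPolynomial (Fin n) ℂ}

lemma dV_add (A B : MvPolynomial (Fin n) ℂ) : dV V (A + B) = dV V A + dV V B := by
  simp [dV, mul_add, Finset.sum_add_distrib]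

lemma dV_C (c : ℂ) : dV V (C c : MvPolynomial (Fin n) ℂ) = 0 := by
  simp [dV, pderiv_C]

lemma dV_sum {ι : Type*} (t : Finset ι) (f : ι → MvPolynomial (Fin n) ℂ) :
    dV V (∑ e ∈ t, f e) = ∑ e ∈ t, dV V (f e) := by
  classical
  induction t using Finset.induction with
  | empty => simp [dV]
  | insert _ _ h ih => simp [Finset.sum_insert h, dV_add, ih]

lemma dV_mul (A B : MvPolynomial (Fin n) ℂ) :
    dV V (A * B) = dV V A * B + A * dV V B := by
  simp only [dV, pderiv_mul, mul_add, Finset.sum_add_distrib, Finset.sum_mul, Finset.mul_sum]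
  congr 1
  · exact Finset.sum_congr rfl fun i _ => by ring
  · exact Finset.sum_congr rfl fun i _ => by ring

lemma dV_pow (A : MvPolynomial (Fin n) ℂ) (t : ℕ) :
    dV V (A ^ (t + 1)) = C ((t : ℂ) + 1) * A ^ t * dV V A := by
  induction t with
  | zero => simp [dV]
  | succ t ih =>
    rw [pow_succ, dV_mul, ih]
    push_cast
    simp only [map_add, map_one, map_ofNat]
    ring

lemma pderiv_isHomogeneous {F : MvPolynomial (Fin n) ℂ} {m : ℕ} (i : Fin n)
    (hF : F.IsHomogeneous m) : (pderiv i F).IsHomogeneous (m - 1) := by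
  classical
  have : pderiv i F = ∑ d ∈ F.support, pderiv i (monomial d (coeff d F)) := by
    rw [← map_sum, ← F.as_sum]
  rw [this]
  apply MvPolynomial.IsHomogeneous.sum
  intro d hd
  rw [pderiv_monomial]
  rcases Nat.eq_zero_or_pos (d i) with h0 | hpos
  · rw [h0]; simp only [Nat.cast_zero, mul_zero, map_zero]
    exact isHomogeneous_zero _ _ _
  · apply isHomogeneous_monomial
    have hdeg : d.degree = m := by
      by_contra hne
      exact (mem_support_iff.mp hd) (hF.coeff_eq_zero hne)
    have hle : Finsupp.single i 1 ≤ d := by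
      rw [Finsupp.single_le_iff]; exact hpos
    have hadd : (d - Finsupp.single i 1) + Finsupp.single i 1 = d :=
      tsub_add_cancel_of_le hle
    have h2 : Finsupp.degree (d - Finsupp.single i 1) + Finsupp.degree (Finsupp.single i 1)
        = Finsupp.degree d := by
      simp only [Finsupp.degree_eq_weight_one, ← map_add, hadd]
    have hsingle : (Finsupp.single i 1).degree = 1 := by
      rw [Finsupp.degree_single]
    omega

lemma eq_C_of_isHomogeneous_zero {p : MvPolynomial (Fin n) ℂ}
    (hp : p.IsHomogeneous 0) : p = C (coeff 0 p) := by
  ext d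
  rcases eq_or_ne d 0 with rfl | hd
  · simp
  · rw [coeff_C, if_neg (Ne.symm hd)]
    apply hp.coeff_eq_zero
    rwa [Ne, Finsupp.degree_eq_zero_iff]

lemma dV_zero (V : Fin n → MvPolynomial (Fin n) ℂ) :
    dV V (0 : MvPolynomial (Fin n) ℂ) = 0 := by
  simp [dV]

lemma dV_isHomogeneous {k m : ℕ} (hV : ∀ i, (V i).IsHomogeneous k)
    {F : MvPolynomial (Fin n) ℂ} (hF : F.IsHomogeneous m) :
    (dV V F).IsHomogeneous (m + k - 1) := by
  rcases Nat.eq_zero_or_pos m with rfl | hm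
  · rw [eq_C_of_isHomogeneous_zero hF, dV_C]
    exact isHomogeneous_zero _ _ _
  · apply MvPolynomial.IsHomogeneous.sum
    intro i _
    have := (hV i).mul (pderiv_isHomogeneous i hF)
    have heq : k + (m - 1) = m + k - 1 := by omega
    rwa [heq] at this

noncomputable def minDeg (p : MvPolynomial (Fin n) ℂ) : ℕ :=
  if h : p = 0 then 0 else p.support.inf' (MvPolynomial.support_nonempty.mpr h) Finsupp.degree

lemma degree_add' (d e : Fin n →₀ ℕ) : (d + e).degree = d.degree + e.degree := by
  simp [Finsupp.degree_eq_weight_one, map_add]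

lemma minDeg_le {p : MvPolynomial (Fin n) ℂ} {d : Fin n →₀ ℕ} (hd : d ∈ p.support) :
    minDeg p ≤ d.degree := by
  have hp : p ≠ 0 := fun h => by simp [h] at hd
  rw [minDeg, dif_neg hp]
  exact Finset.inf'_le _ hd

lemma le_totalDegree' {p : MvPolynomial (Fin n) ℂ} {d : Fin n →₀ ℕ} (hd : d ∈ p.support) :
    d.degree ≤ p.totalDegree := le_totalDegree hd

lemma exists_degree_eq_minDeg {p : MvPolynomial (Fin n) ℂ} (hp : p ≠ 0) :
    ∃ d ∈ p.support, d.degree = minDeg p := by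
  rw [minDeg, dif_neg hp]
  obtain ⟨d, hd, h⟩ := p.support.exists_mem_eq_inf' (MvPolynomial.support_nonempty.mpr hp)
    Finsupp.degree
  exact ⟨d, hd, h.symm⟩

lemma exists_degree_eq_totalDegree {p : MvPolynomial (Fin n) ℂ} (hp : p ≠ 0) :
    ∃ d ∈ p.support, d.degree = p.totalDegree := by
  obtain ⟨d, hd, h⟩ := Finset.exists_mem_eq_sup p.support
    (MvPolynomial.support_nonempty.mpr hp) (fun d => d.sum fun _ e => e)
  exact ⟨d, hd, h.symm⟩

lemma homogeneousComponent_minDeg_ne_zero {p : MvPolynomial (Fin n) ℂ} (hp : p ≠ 0) :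
    homogeneousComponent (minDeg p) p ≠ 0 := by
  obtain ⟨d, hd, h⟩ := exists_degree_eq_minDeg hp
  intro hzero
  have := coeff_homogeneousComponent (minDeg p) p d
  rw [hzero, if_pos h, coeff_zero] at this
  exact mem_support_iff.mp hd this.symm

lemma homogeneousComponent_totalDegree_ne_zero {p : MvPolynomial (Fin n) ℂ} (hp : p ≠ 0) :
    homogeneousComponent p.totalDegree p ≠ 0 := by
  obtain ⟨d, hd, h⟩ := exists_degree_eq_totalDegree hp
  intro hzero
  have := coeff_homogeneousComponent p.totalDegree p d
  rw [hzero, if_pos h, coeff_zero] at this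
  exact mem_support_iff.mp hd this.symm

lemma mem_support_homogeneousComponent {p : MvPolynomial (Fin n) ℂ} {x : ℕ} {d : Fin n →₀ ℕ}
    (hd : d ∈ (homogeneousComponent x p).support) : d.degree = x ∧ d ∈ p.support := by
  have := mem_support_iff.mp hd
  rw [coeff_homogeneousComponent] at this
  by_cases h : d.degree = x
  · exact ⟨h, mem_support_iff.mpr (by rwa [if_pos h] at this)⟩
  · rw [if_neg h] at this; exact absurd rfl this

lemma mem_support_sub_homogeneousComponent {p : MvPolynomial (Fin n) ℂ} {x : ℕ} {d : Fin n →₀ ℕ}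
    (hd : d ∈ (p - homogeneousComponent x p).support) : d.degree ≠ x ∧ d ∈ p.support := by
  have h := mem_support_iff.mp hd
  rw [coeff_sub, coeff_homogeneousComponent] at h
  by_cases hdx : d.degree = x
  · rw [if_pos hdx, sub_self] at h; exact absurd rfl h
  · rw [if_neg hdx, sub_zero] at h; exact ⟨hdx, mem_support_iff.mpr h⟩

lemma component_mul_eq_zero_bot {A B : MvPolynomial (Fin n) ℂ} {a b : ℕ}
    (hA : ∀ d ∈ A.support, a < d.degree) (hB : ∀ d ∈ B.support, b ≤ d.degree) :
    homogeneousComponent (a + b) (A * B) = 0 := by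
  classical
  apply homogeneousComponent_eq_zero'
  intro d hd
  have := MvPolynomial.support_mul A B hd
  rw [Finset.mem_add] at this
  obtain ⟨d1, h1, d2, h2, rfl⟩ := this
  have := hA d1 h1
  have := hB d2 h2
  rw [degree_add']
  omega

lemma component_mul_eq_zero_top {A B : MvPolynomial (Fin n) ℂ} {a b : ℕ}
    (hA : ∀ d ∈ A.support, d.degree < a) (hB : ∀ d ∈ B.support, d.degree ≤ b) :
    homogeneousComponent (a + b) (A * B) = 0 := by
  classical
  apply homogeneousComponent_eq_zero'
  intro d hd
  have := MvPolynomial.support_mul A B hd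
  rw [Finset.mem_add] at this
  obtain ⟨d1, h1, d2, h2, rfl⟩ := this
  have := hA d1 h1
  have := hB d2 h2
  rw [degree_add']
  omega

lemma homogeneousComponent_mul_bot (A B : MvPolynomial (Fin n) ℂ) (hA : A ≠ 0) (hB : B ≠ 0) :
    homogeneousComponent (minDeg A + minDeg B) (A * B)
      = homogeneousComponent (minDeg A) A * homogeneousComponent (minDeg B) B := by
  set a := minDeg A
  set b := minDeg B
  set Ca := homogeneousComponent a A with hCa
  set Cb := homogeneousComponent b B with hCb
  have hA' : ∀ d ∈ (A - Ca).support, a < d.degree := fun d hd => by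
    obtain ⟨h1, h2⟩ := mem_support_sub_homogeneousComponent hd
    exact lt_of_le_of_ne (minDeg_le h2) (Ne.symm h1)
  have hB' : ∀ d ∈ (B - Cb).support, b < d.degree := fun d hd => by
    obtain ⟨h1, h2⟩ := mem_support_sub_homogeneousComponent hd
    exact lt_of_le_of_ne (minDeg_le h2) (Ne.symm h1)
  have hCasup : ∀ d ∈ Ca.support, a ≤ d.degree := fun d hd =>
    le_of_eq (mem_support_homogeneousComponent hd).1.symm
  have hCbsup : ∀ d ∈ Cb.support, b ≤ d.degree := fun d hd =>
    le_of_eq (mem_support_homogeneousComponent hd).1.symm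
  have hsplit : A * B = Ca * Cb + ((A - Ca) * Cb + (Ca * (B - Cb) + (A - Ca) * (B - Cb))) := by
    ring
  rw [hsplit, map_add, map_add, map_add]
  rw [component_mul_eq_zero_bot hA' hCbsup]
  rw [show Ca * (B - Cb) = (B - Cb) * Ca by ring, show a + b = b + a by ring,
    component_mul_eq_zero_bot hB' hCasup]
  rw [show (A - Ca) * (B - Cb) = (B - Cb) * (A - Ca) by ring,
    component_mul_eq_zero_bot hB' (fun d hd => le_of_lt (hA' d hd))]
  have hhom : Ca * Cb ∈ homogeneousSubmodule (Fin n) ℂ (a + b) :=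
    (mem_homogeneousSubmodule _ _).mpr
      ((homogeneousComponent_isHomogeneous a A).mul (homogeneousComponent_isHomogeneous b B))
  rw [show b + a = a + b by ring, homogeneousComponent_of_mem hhom, if_pos rfl]
  ring

lemma homogeneousComponent_mul_top (A B : MvPolynomial (Fin n) ℂ) :
    homogeneousComponent (A.totalDegree + B.totalDegree) (A * B)
      = homogeneousComponent A.totalDegree A * homogeneousComponent B.totalDegree B := by
  set a := A.totalDegree
  set b := B.totalDegree
  set Ca := homogeneousComponent a A
  set Cb := homogeneousComponent b B
  have hA' : ∀ d ∈ (A - Ca).support, d.degree < a := fun d hd => by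
    obtain ⟨h1, h2⟩ := mem_support_sub_homogeneousComponent hd
    exact lt_of_le_of_ne (le_totalDegree h2) h1
  have hB' : ∀ d ∈ (B - Cb).support, d.degree < b := fun d hd => by
    obtain ⟨h1, h2⟩ := mem_support_sub_homogeneousComponent hd
    exact lt_of_le_of_ne (le_totalDegree h2) h1
  have hCasup : ∀ d ∈ Ca.support, d.degree ≤ a := fun d hd =>
    le_of_eq (mem_support_homogeneousComponent hd).1
  have hCbsup : ∀ d ∈ Cb.support, d.degree ≤ b := fun d hd =>
    le_of_eq (mem_support_homogeneousComponent hd).1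
  have hsplit : A * B = Ca * Cb + ((A - Ca) * Cb + (Ca * (B - Cb) + (A - Ca) * (B - Cb))) := by
    ring
  rw [hsplit, map_add, map_add, map_add]
  rw [component_mul_eq_zero_top hA' hCbsup]
  rw [show Ca * (B - Cb) = (B - Cb) * Ca by ring, show a + b = b + a by ring,
    component_mul_eq_zero_top hB' hCasup]
  rw [show (A - Ca) * (B - Cb) = (B - Cb) * (A - Ca) by ring,
    component_mul_eq_zero_top hB' (fun d hd => le_of_lt (hA' d hd))]
  have hhom : Ca * Cb ∈ homogeneousSubmodule (Fin n) ℂ (a + b) :=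
    (mem_homogeneousSubmodule _ _).mpr
      ((homogeneousComponent_isHomogeneous a A).mul (homogeneousComponent_isHomogeneous b B))
  rw [show b + a = a + b by ring, homogeneousComponent_of_mem hhom, if_pos rfl]
  ring

lemma exists_support_degree_of_component_ne_zero {p : MvPolynomial (Fin n) ℂ} {x : ℕ}
    (h : homogeneousComponent x p ≠ 0) : ∃ d ∈ p.support, d.degree = x := by
  obtain ⟨d, hd⟩ := MvPolynomial.support_nonempty.mpr h
  obtain ⟨h1, h2⟩ := mem_support_homogeneousComponent hd
  exact ⟨d, h2, h1⟩

lemma isHomogeneous_of_minDeg_eq_totalDegree {p : MvPolynomial (Fin n) ℂ}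
    (h : minDeg p = p.totalDegree) : p.IsHomogeneous p.totalDegree := by
  have hp : p = homogeneousComponent p.totalDegree p := by
    ext d
    rw [coeff_homogeneousComponent]
    by_cases hd : d.degree = p.totalDegree
    · rw [if_pos hd]
    · rw [if_neg hd]
      by_contra hc
      have hmem : d ∈ p.support := mem_support_iff.mpr hc
      have h1 := minDeg_le hmem
      have h2 : d.degree ≤ p.totalDegree := le_totalDegree hmem
      omega
  have := homogeneousComponent_isHomogeneous p.totalDegree p
  rwa [← hp] at this

lemma isHomogeneous_of_mul_left {A B : MvPolynomial (Fin n) ℂ} {m : ℕ}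
    (h : (A * B).IsHomogeneous m) (hA : A ≠ 0) (hB : B ≠ 0) :
    A.IsHomogeneous A.totalDegree := by
  have hAB : A * B ≠ 0 := mul_ne_zero hA hB
  have hbot : homogeneousComponent (minDeg A + minDeg B) (A * B) ≠ 0 := by
    rw [homogeneousComponent_mul_bot A B hA hB]
    exact mul_ne_zero (homogeneousComponent_minDeg_ne_zero hA)
      (homogeneousComponent_minDeg_ne_zero hB)
  have htop : homogeneousComponent (A.totalDegree + B.totalDegree) (A * B) ≠ 0 := by
    rw [homogeneousComponent_mul_top A B]
    exact mul_ne_zero (homogeneousComponent_totalDegree_ne_zero hA)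
      (homogeneousComponent_totalDegree_ne_zero hB)
  obtain ⟨d1, hd1, he1⟩ := exists_support_degree_of_component_ne_zero hbot
  obtain ⟨d2, hd2, he2⟩ := exists_support_degree_of_component_ne_zero htop
  have h1 : minDeg A + minDeg B = m := by
    rw [← he1]; by_contra hne; exact mem_support_iff.mp hd1 (h.coeff_eq_zero (he1 ▸ hne))
  have h2 : A.totalDegree + B.totalDegree = m := by
    rw [← he2]; by_contra hne; exact mem_support_iff.mp hd2 (h.coeff_eq_zero (he2 ▸ hne))
  have hminA : minDeg A ≤ A.totalDegree := by
    obtain ⟨d, hd, he⟩ := exists_degree_eq_minDeg hA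
    rw [← he]; exact le_totalDegree' hd
  have hminB : minDeg B ≤ B.totalDegree := by
    obtain ⟨d, hd, he⟩ := exists_degree_eq_minDeg hB
    rw [← he]; exact le_totalDegree' hd
  exact isHomogeneous_of_minDeg_eq_totalDegree (by omega)

lemma darboux_factor {A B Q : MvPolynomial (Fin n) ℂ} (hA : Prime A) (t : ℕ)
    (hnd : ¬ A ∣ B) (h : dV V (A ^ (t + 1) * B) = Q * (A ^ (t + 1) * B)) :
    A ∣ dV V A := by
  rw [dV_mul, dV_pow] at h
  have hAne : A ≠ 0 := hA.ne_zero
  have hcancel : C ((t : ℂ) + 1) * dV V A * B + A * dV V B = Q * (A * B) := by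
    have := h
    have hpow : A ^ (t + 1) = A ^ t * A := by ring
    apply mul_left_cancel₀ (pow_ne_zero t hAne)
    rw [show A ^ t * (C ((t:ℂ)+1) * dV V A * B + A * dV V B) =
      C ((t:ℂ)+1) * A ^ t * dV V A * B + A ^ (t+1) * dV V B by ring, h]
    ring
  have hdvd : A ∣ C ((t : ℂ) + 1) * dV V A * B := by
    refine ⟨Q * B - dV V B, ?_⟩
    have : C ((t : ℂ) + 1) * dV V A * B = Q * (A * B) - A * dV V B := by
      rw [← hcancel]; ring
    rw [this]; ring
  rcases hA.dvd_mul.mp hdvd with h1 | h2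
  · rcases hA.dvd_mul.mp h1 with h3 | h4
    · exfalso
      apply hA.not_unit
      apply isUnit_of_dvd_unit h3
      apply IsUnit.map (C : ℂ →+* MvPolynomial (Fin n) ℂ)
      exact isUnit_iff_ne_zero.mpr (Nat.cast_add_one_ne_zero t)
    · exact h4
  · exact absurd h2 hnd

lemma totalDegree_eq_zero_of_isUnit {H : MvPolynomial (Fin n) ℂ} (h : IsUnit H) :
    H.totalDegree = 0 := by
  obtain ⟨B, hB⟩ := h.exists_right_inv
  have hH : H ≠ 0 := h.ne_zero
  have hB0 : B ≠ 0 := by rintro rfl; simp at hB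
  have htop : homogeneousComponent (H.totalDegree + B.totalDegree) (H * B) ≠ 0 := by
    rw [homogeneousComponent_mul_top H B]
    exact mul_ne_zero (homogeneousComponent_totalDegree_ne_zero hH)
      (homogeneousComponent_totalDegree_ne_zero hB0)
  obtain ⟨d, hd⟩ := MvPolynomial.support_nonempty.mpr htop
  obtain ⟨hdeg, hmem⟩ := mem_support_homogeneousComponent hd
  rw [hB] at hmem
  have : d = 0 := by
    by_contra hd0
    have := mem_support_iff.mp hmem
    rw [show ((1 : MvPolynomial (Fin n) ℂ)) = C 1 from (map_one C).symm, coeff_C,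
      if_neg (Ne.symm hd0)] at this
    exact this rfl
  rw [this, map_zero] at hdeg
  omega

lemma prod_pow_update (G : Fin s → MvPolynomial (Fin n) ℂ) (β : Fin s → ℕ) (j₀ : Fin s) :
    ∏ j, G j ^ (Function.update β j₀ (β j₀ + 1) j) = G j₀ * ∏ j, G j ^ β j := by
  classical
  rw [← Finset.prod_erase_mul _ _ (Finset.mem_univ j₀),
      ← Finset.prod_erase_mul _ _ (Finset.mem_univ j₀)]
  have h1 : ∏ j ∈ Finset.univ.erase j₀, G j ^ (Function.update β j₀ (β j₀ + 1) j)
      = ∏ j ∈ Finset.univ.erase j₀, G j ^ β j :=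
    Finset.prod_congr rfl fun j hj => by
      rw [Function.update_of_ne (Finset.ne_of_mem_erase hj)]
  rw [h1, Function.update_self, pow_succ]
  ring

section cof
variable (F P : Fin s → MvPolynomial (Fin n) ℂ)
  (hD : ∀ j, dV V (F j) = P j * F j)

include hD

lemma dV_F_pow (j : Fin s) (t : ℕ) :
    dV V (F j ^ t) = C (t : ℂ) * P j * F j ^ t := by
  cases t with
  | zero => simp [dV, pow_zero, pderiv_one]
  | succ t =>
    rw [dV_pow, hD j]
    push_cast
    ring

lemma dV_prod_pow (α : Fin s → ℕ) :
    dV V (∏ j, F j ^ α j) = (∑ j, C (α j : ℂ) * P j) * ∏ j, F j ^ α j := by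
  classical
  have key : ∀ t : Finset (Fin s),
      dV V (∏ j ∈ t, F j ^ α j) = (∑ j ∈ t, C (α j : ℂ) * P j) * ∏ j ∈ t, F j ^ α j := by
    intro t
    induction t using Finset.induction with
    | empty => simp [dV, pderiv_one]
    | @insert a t ha ih =>
      rw [Finset.prod_insert ha, Finset.sum_insert ha, dV_mul, ih,
        dV_F_pow F P hD a (α a)]
      ring
  exact key Finset.univ
end cof

lemma key_lemma
    (F P : Fin s → MvPolynomial (Fin n) ℂ)
    (hirr : ∀ j, Irreducible (F j))
    (hall : ∀ G : MvPolynomial (Fin n) ℂ, Irreducible G →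
      (∃ m : ℕ, G.IsHomogeneous m) → (∃ Q, dV V G = Q * G) →
      ∃ (j : Fin s) (c : ℂ), c ≠ 0 ∧ G = C c * F j) :
    ∀ m : ℕ, ∀ H : MvPolynomial (Fin n) ℂ, H ≠ 0 → H.IsHomogeneous m →
      (∃ Q, dV V H = Q * H) →
      ∃ (c : ℂ) (α : Fin s → ℕ), c ≠ 0 ∧ H = C c * ∏ j, F j ^ α j := by
  intro m
  induction m using Nat.strong_induction_on with
  | _ m ih =>
    intro H hne hhom ⟨Q, hQ⟩
    rcases Nat.eq_zero_or_pos m with rfl | hm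
    · refine ⟨coeff 0 H, 0, ?_, ?_⟩
      · intro h0
        exact hne (by rw [eq_C_of_isHomogeneous_zero hhom, h0, map_zero])
      · rw [← eq_C_of_isHomogeneous_zero hhom]
        simp
    · -- m ≥ 1
      have htd : H.totalDegree = m := hhom.totalDegree hne
      have hnu : ¬ IsUnit H := fun h => by
        rw [totalDegree_eq_zero_of_isUnit h] at htd; omega
      obtain ⟨A, hAirr, hAdvd⟩ := WfDvdMonoid.exists_irreducible_factor hnu hne
      obtain ⟨t, B, hnd, hHeq⟩ := WfDvdMonoid.max_power_factor hne hAirr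
      have hAprime : Prime A := hAirr.prime
      rcases Nat.eq_zero_or_pos t with rfl | ht
      · rw [hHeq, pow_zero, one_mul] at hAdvd ⊢
        exact absurd hAdvd hnd
      obtain ⟨t', rfl⟩ : ∃ t', t = t' + 1 := ⟨t - 1, by omega⟩
      have hAdA : A ∣ dV V A := darboux_factor hAprime t' hnd (by rw [← hHeq, hQ, hHeq])
      obtain ⟨Ra, hRa⟩ := hAdA
      set W : MvPolynomial (Fin n) ℂ := A ^ t' * B with hW
      have hHW : H = A * W := by rw [hHeq, hW]; ring
      have hA0 : A ≠ 0 := hAprime.ne_zero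
      have hW0 : W ≠ 0 := by rintro h0; rw [hHW, h0, mul_zero] at hne; exact hne rfl
      have hmulhom : (A * W).IsHomogeneous m := by rwa [← hHW]
      have hAhom : A.IsHomogeneous A.totalDegree := isHomogeneous_of_mul_left hmulhom hA0 hW0
      have hWhom : W.IsHomogeneous W.totalDegree :=
        isHomogeneous_of_mul_left (by rwa [mul_comm] at hmulhom) hW0 hA0
      have hsum : A.totalDegree + W.totalDegree = m :=
        (hAhom.mul hWhom).inj_right hmulhom (mul_ne_zero hA0 hW0)
      have ha1 : 1 ≤ A.totalDegree := by
        rcases Nat.eq_zero_or_pos A.totalDegree with h0 | h; swap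
        · exact h
        · exfalso
          apply hAirr.not_isUnit
          have : A = C (coeff 0 A) := eq_C_of_isHomogeneous_zero (h0 ▸ hAhom)
          rw [this]
          apply IsUnit.map (C : ℂ →+* MvPolynomial (Fin n) ℂ)
          apply isUnit_iff_ne_zero.mpr
          intro hc; rw [hc, map_zero] at this; exact hA0 this
      -- A is an irreducible homogeneous Darboux polynomial
      obtain ⟨j₀, c₀, hc₀, hAeq⟩ := hall A hAirr ⟨A.totalDegree, hAhom⟩
        ⟨Ra, by rw [hRa]; ring⟩
      -- W is Darboux
      have hdW : dV V W = (Q - Ra) * W := by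
        have h1 : dV V (A * W) = Q * (A * W) := by rw [← hHW, hQ, hHW]
        rw [dV_mul, hRa] at h1
        have h2 : A * (Ra * W + dV V W) = A * (Q * W) := by
          rw [show A * (Ra * W + dV V W) = A * Ra * W + A * dV V W by ring, h1]; ring
        have := mul_left_cancel₀ hA0 h2
        rw [sub_mul, ← this]; ring
      obtain ⟨c₁, β, hc₁, hWeq⟩ := ih W.totalDegree (by omega) W hW0 hWhom ⟨Q - Ra, hdW⟩
      refine ⟨c₀ * c₁, Function.update β j₀ (β j₀ + 1), mul_ne_zero hc₀ hc₁, ?_⟩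
      rw [prod_pow_update, hHW, hAeq, hWeq, map_mul]
      ring

end Auxiliary

/-- Let `d_V` be a homogeneous derivation, and suppose `F₁,…,F_s`
are, up to multiplicative constants, all the irreducible homogeneous Darboux
polynomials of `d_V`, with `d_V(Fᵢ) = Pᵢ·Fᵢ`. If `P₁,…,P_s` are linearly independent
over `ℤ`, then every Darboux polynomial of `d_V` is, up to a nonzero multiplicative
constant, of the form `∏ᵢ Fᵢ^{αᵢ}` with non-negative integers `αᵢ`. -/
theorem darboux_polynomials_are_monomials_in_irreducibles
    {n s : ℕ} (k : ℕ) (V : Fin n → MvPolynomial (Fin n) ℂ)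
    (hV : ∀ i, (V i).IsHomogeneous k)
    (F P : Fin s → MvPolynomial (Fin n) ℂ)
    (hirr : ∀ j, Irreducible (F j))
    (hhom : ∀ j, ∃ m : ℕ, (F j).IsHomogeneous m)
    (hD : ∀ j, dV V (F j) = P j * F j)
    (hall : ∀ G : MvPolynomial (Fin n) ℂ, Irreducible G →
      (∃ m : ℕ, G.IsHomogeneous m) → (∃ Q, dV V G = Q * G) →
      ∃ (j : Fin s) (c : ℂ), c ≠ 0 ∧ G = C c * F j)
    (hind : ∀ a : Fin s → ℤ, (∑ j, a j • P j) = 0 → ∀ j, a j = 0) :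
    ∀ G : MvPolynomial (Fin n) ℂ, (∀ c : ℂ, G ≠ C c) →
      (∃ Q, dV V G = Q * G) →
      ∃ (c : ℂ) (α : Fin s → ℕ), c ≠ 0 ∧ G = C c * ∏ j, F j ^ α j := by
  intro G hGC ⟨Q, hQ⟩
  classical
  have hG0 : G ≠ 0 := fun h => hGC 0 (by rw [h, map_zero])
  set M := G.totalDegree with hM
  set Gc : ℕ → MvPolynomial (Fin n) ℂ := fun e => homogeneousComponent e G with hGc
  have hdecomp : ∑ e ∈ Finset.range (M + 1), Gc e = G := sum_homogeneousComponent G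
  have hdG : dV V G = ∑ e ∈ Finset.range (M + 1), dV V (Gc e) := by
    conv_lhs => rw [← hdecomp]
    exact dV_sum _ _
  have hGc0 : dV V (Gc 0) = 0 := by
    rw [hGc]; simp only [homogeneousComponent_zero]; exact dV_C _
  have hGchom : ∀ e, (Gc e).IsHomogeneous e := fun e => homogeneousComponent_isHomogeneous e G
  have hdGchom : ∀ e, (dV V (Gc e)).IsHomogeneous (e + k - 1) :=
    fun e => dV_isHomogeneous hV (hGchom e)
  -- the independence consequence
  have hinj : ∀ α β : Fin s → ℕ,
      (∑ j, C (α j : ℂ) * P j) = (∑ j, C (β j : ℂ) * P j) → α = β := by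
    intro α β hab
    have h0 : ∑ j, ((α j : ℤ) - (β j : ℤ)) • P j = 0 := by
      have : ∀ j, ((α j : ℤ) - (β j : ℤ)) • P j
          = C (α j : ℂ) * P j - C (β j : ℂ) * P j := by
        intro j
        rw [sub_smul]
        congr 1 <;>
          rw [natCast_zsmul, nsmul_eq_mul, ← map_natCast (C : ℂ →+* MvPolynomial (Fin n) ℂ)]
      rw [Finset.sum_congr rfl fun j _ => this j, Finset.sum_sub_distrib, hab, sub_self]
    funext j
    have := hind _ h0 j
    omega
  -- case analysis
  by_cases hdG0 : dV V G = 0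
  · -- derivative vanishes; G must be constant, contradiction
    exfalso
    have hvanish : ∀ e ∈ Finset.range (M + 1), 1 ≤ e → Gc e = 0 := by
      intro e he he1
      by_contra hne
      -- extract component e + k - 1 from 0 = dV V G
      have hext : dV V (Gc e) = 0 := by
        have h0 : (0 : MvPolynomial (Fin n) ℂ)
            = ∑ e' ∈ Finset.range (M + 1), homogeneousComponent (e + k - 1) (dV V (Gc e')) := by
          rw [← map_sum, ← hdG, hdG0, map_zero]
        have hterm : ∀ e' ∈ Finset.range (M + 1),
            homogeneousComponent (e + k - 1) (dV V (Gc e'))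
              = if e' = e then dV V (Gc e') else 0 := by
          intro e' _
          rcases Nat.eq_zero_or_pos e' with rfl | he'
          · rw [hGc0, map_zero, if_neg (by omega)]
          · rw [homogeneousComponent_of_mem ((mem_homogeneousSubmodule _ _).mpr (hdGchom e'))]
            by_cases heq : e' = e
            · rw [if_pos (by omega), if_pos heq]
            · rw [if_neg (by omega), if_neg heq]
        rw [Finset.sum_congr rfl hterm, Finset.sum_ite_eq' _ e _, if_pos he] at h0
        exact h0.symm
      obtain ⟨c, α, hc, heq⟩ := key_lemma F P hirr hall e (Gc e) hne (hGchom e) ⟨0, by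
        rw [hext, zero_mul]⟩
      have hcof : dV V (Gc e) = (∑ j, C (α j : ℂ) * P j) * Gc e := by
        rw [heq, dV_mul, dV_C, dV_prod_pow F P hD α]
        ring
      have hzero : (∑ j, C (α j : ℂ) * P j) = ∑ j, C ((0 : Fin s → ℕ) j : ℂ) * P j := by
        have : (∑ j, C (α j : ℂ) * P j) * Gc e = 0 := by rw [← hcof, hext]
        rcases mul_eq_zero.mp this with h | h
        · rw [h]; simp
        · exact absurd h hne
      have hα0 : α = 0 := hinj _ _ hzero
      rw [hα0] at heq
      simp only [Pi.zero_apply, pow_zero, Finset.prod_const_one, mul_one] at heq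
      have h1 := hGchom e
      rw [heq] at h1 hne
      have : e = 0 := h1.inj_right (isHomogeneous_C _ c) hne
      omega
    have : G = Gc 0 := by
      rw [← hdecomp, Finset.sum_eq_single 0]
      · intro e he hne; exact hvanish e he (by omega)
      · intro h; exact absurd (Finset.mem_range.mpr (by omega)) h
    rw [hGc] at this
    simp only [homogeneousComponent_zero] at this
    exact hGC _ this
  · -- derivative does not vanish
    have hQ0 : Q ≠ 0 := by rintro rfl; rw [zero_mul] at hQ; exact hdG0 hQ
    have hM1 : 1 ≤ M := by
      rcases Nat.eq_zero_or_pos M with h0 | h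
      · exfalso
        apply hGC (coeff 0 G)
        ext d
        rcases eq_or_ne d 0 with rfl | hd
        · simp
        · rw [coeff_C, if_neg (Ne.symm hd)]
          by_contra hc
          have hmem := mem_support_iff.mpr hc
          have hle := le_totalDegree' hmem
          rw [← hM, h0, Nat.le_zero, Finsupp.degree_eq_zero_iff] at hle
          exact hd hle
      · exact h
    -- support degrees of dV V G
    have hsupp : ∀ d ∈ (dV V G).support,
        ∃ e, 1 ≤ e ∧ e ≤ M ∧ minDeg G ≤ e ∧ d.degree = e + k - 1 := by
      intro d hd
      have hcoeff : coeff d (dV V G) ≠ 0 := mem_support_iff.mp hd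
      rw [hdG] at hcoeff
      have : ∃ e' ∈ Finset.range (M + 1), coeff d (dV V (Gc e')) ≠ 0 := by
        by_contra hno
        push_neg at hno
        rw [coeff_sum] at hcoeff
        exact hcoeff (Finset.sum_eq_zero fun e' he' => hno e' he')
      obtain ⟨e', he', hce⟩ := this
      have he'pos : 1 ≤ e' := by
        rcases Nat.eq_zero_or_pos e' with rfl | h
        · rw [hGc0, coeff_zero] at hce; exact absurd rfl hce
        · exact h
      have hGce : Gc e' ≠ 0 := by
        rintro h0; rw [h0, dV_zero, coeff_zero] at hce; exact hce rfl
      have hminle : minDeg G ≤ e' := by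
        obtain ⟨d', hd'⟩ := MvPolynomial.support_nonempty.mpr hGce
        obtain ⟨h1, h2⟩ := mem_support_homogeneousComponent hd'
        rw [← h1]; exact minDeg_le h2
      have hdeg : d.degree = e' + k - 1 := by
        by_contra hne
        exact hce ((hdGchom e').coeff_eq_zero hne)
      exact ⟨e', he'pos, Finset.mem_range.mp he' |> fun h => by omega, hminle, hdeg⟩
    -- top estimate: k ≥ 1 and Q.totalDegree ≤ k - 1
    have htopne : homogeneousComponent (Q.totalDegree + G.totalDegree) (Q * G) ≠ 0 := by
      rw [homogeneousComponent_mul_top Q G]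
      exact mul_ne_zero (homogeneousComponent_totalDegree_ne_zero hQ0)
        (homogeneousComponent_totalDegree_ne_zero hG0)
    obtain ⟨dt, hdt, hdegt⟩ := exists_support_degree_of_component_ne_zero htopne
    rw [← hQ] at hdt
    obtain ⟨e₁, he₁1, he₁M, _, hdeg₁⟩ := hsupp dt hdt
    have htopk : 1 ≤ k ∧ Q.totalDegree ≤ k - 1 := by
      rw [hdeg₁] at hdegt
      constructor <;> omega
    obtain ⟨hk1, hQtople⟩ := htopk
    -- bottom estimate : minDeg Q ≥ k - 1
    have hbotne : homogeneousComponent (minDeg Q + minDeg G) (Q * G) ≠ 0 := by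
      rw [homogeneousComponent_mul_bot Q G hQ0 hG0]
      exact mul_ne_zero (homogeneousComponent_minDeg_ne_zero hQ0)
        (homogeneousComponent_minDeg_ne_zero hG0)
    obtain ⟨db, hdb, hdegb⟩ := exists_support_degree_of_component_ne_zero hbotne
    rw [← hQ] at hdb
    obtain ⟨e₂, he₂1, he₂M, he₂min, hdeg₂⟩ := hsupp db hdb
    have hQbotge : k - 1 ≤ minDeg Q := by
      rw [hdeg₂] at hdegb
      omega
    have hQminle : minDeg Q ≤ Q.totalDegree := by
      obtain ⟨d, hd, he⟩ := exists_degree_eq_minDeg hQ0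
      rw [← he]; exact le_totalDegree' hd
    have hQtot : Q.totalDegree = k - 1 := by omega
    have hQhom : Q.IsHomogeneous (k - 1) := by
      have := isHomogeneous_of_minDeg_eq_totalDegree (p := Q) (by omega)
      rwa [hQtot] at this
    -- componentwise Darboux property
    have hDarb : ∀ e ∈ Finset.range (M + 1), dV V (Gc e) = Q * Gc e := by
      intro e he
      have hLHS : homogeneousComponent (e + k - 1) (dV V G) = dV V (Gc e) := by
        rw [hdG, map_sum]
        have hterm : ∀ e' ∈ Finset.range (M + 1),
            homogeneousComponent (e + k - 1) (dV V (Gc e'))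
              = if e' = e then dV V (Gc e') else 0 := by
          intro e' _
          rcases Nat.eq_zero_or_pos e' with rfl | he'pos
          · split_ifs <;> simp [hGc0]
          · rw [homogeneousComponent_of_mem ((mem_homogeneousSubmodule _ _).mpr (hdGchom e'))]
            by_cases heq : e' = e
            · rw [if_pos (by omega), if_pos heq]
            · rw [if_neg (by omega), if_neg heq]
        rw [Finset.sum_congr rfl hterm, Finset.sum_ite_eq' _ e _, if_pos he]
      have hRHS : homogeneousComponent (e + k - 1) (Q * G) = Q * Gc e := by
        conv_lhs => rw [← hdecomp, Finset.mul_sum]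
        rw [map_sum]
        have hterm : ∀ e' ∈ Finset.range (M + 1),
            homogeneousComponent (e + k - 1) (Q * Gc e')
              = if e' = e then Q * Gc e' else 0 := by
          intro e' _
          have hmul : (Q * Gc e').IsHomogeneous (k - 1 + e') := hQhom.mul (hGchom e')
          rw [homogeneousComponent_of_mem ((mem_homogeneousSubmodule _ _).mpr hmul)]
          by_cases heq : e' = e
          · rw [if_pos (by omega), if_pos heq]
          · rw [if_neg (by omega), if_neg heq]
        rw [Finset.sum_congr rfl hterm, Finset.sum_ite_eq' _ e _, if_pos he]
      rw [← hLHS, ← hRHS, hQ]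
    -- apply the key lemma to the top component
    have hGcM : Gc M ≠ 0 := homogeneousComponent_totalDegree_ne_zero hG0
    have hMmem : M ∈ Finset.range (M + 1) := Finset.mem_range.mpr (by omega)
    obtain ⟨cM, αM, hcM, hMeq⟩ := key_lemma F P hirr hall M (Gc M) hGcM (hGchom M)
      ⟨Q, hDarb M hMmem⟩
    have hcof : ∀ e (c : ℂ) (α : Fin s → ℕ), Gc e = C c * ∏ j, F j ^ α j →
        dV V (Gc e) = (∑ j, C (α j : ℂ) * P j) * Gc e := by
      intro e c α heq
      rw [heq, dV_mul, dV_C, dV_prod_pow F P hD α]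
      ring
    have hQcof : Q = ∑ j, C (αM j : ℂ) * P j := by
      have h1 := hcof M cM αM hMeq
      rw [hDarb M hMmem] at h1
      have h2 : (Q - ∑ j, C (αM j : ℂ) * P j) * Gc M = 0 := by rw [sub_mul, h1]; ring
      rcases mul_eq_zero.mp h2 with h | h
      · exact sub_eq_zero.mp h
      · exact absurd h hGcM
    have hnoother : ∀ e ∈ Finset.range (M + 1), e ≠ M → Gc e = 0 := by
      intro e he heM
      by_contra hne
      obtain ⟨c, α, hc, heq⟩ := key_lemma F P hirr hall e (Gc e) hne (hGchom e)
        ⟨Q, hDarb e he⟩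
      have h1 := hcof e c α heq
      rw [hDarb e he] at h1
      have h2 : (Q - ∑ j, C (α j : ℂ) * P j) * Gc e = 0 := by rw [sub_mul, h1]; ring
      have hQα : Q = ∑ j, C (α j : ℂ) * P j := by
        rcases mul_eq_zero.mp h2 with h | h
        · exact sub_eq_zero.mp h
        · exact absurd h hne
      have hαM : α = αM := hinj _ _ (by rw [← hQα, hQcof])
      rw [hαM] at heq
      -- Gc e is a nonzero constant multiple of Gc M, hence homogeneous of degree M
      have hGce' : Gc e = C (c * cM⁻¹) * Gc M := by
        rw [hMeq, heq, ← mul_assoc, ← map_mul, mul_assoc, inv_mul_cancel₀ hcM, mul_one]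
      have hhomM : (Gc e).IsHomogeneous M := by
        rw [hGce']
        exact (hGchom M).C_mul _
      exact heM ((hGchom e).inj_right hhomM hne)
    have hGeq : G = Gc M := by
      rw [← hdecomp, Finset.sum_eq_single M]
      · intro e he hne; exact hnoother e he hne
      · intro h; exact absurd hMmem h
    exact ⟨cM, αM, hcM, by rw [hGeq, hMeq]⟩
end
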